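/- arXiv:1510.08276 — 2 statements merged into one kernel-verified Lean document; each statement's English description precedes it below -/
import Mathlib

section
/- Let G be a connected F-free finite simple graph that is not a clique, and suppose V(G) admits no partition into three sets U, C1, C2 such that every vertex of U is adjacent to all other vertices of G, C1 and C2 both induce cliques, and there is no edge between C1 and C2. Then every maximal strong module M of G induces a cluster graph, i.e., every connected component of the subgraph G[M] is a clique. -/
open SimpleGraph

/-- `M` is a module of `G`: every vertex outside `M` is adjacent to all
vertices of `M` or to none of them. -/
def IsModule {V : Type*} (G : SimpleGraph V) (M : Set V) : Prop :=
  ∀ x ∉ M, (∀ a ∈ M, G.Adj x a) ∨ (∀ a ∈ M, ¬ G.Adj x a)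

/-- A module is strong if it overlaps no other module. -/
def IsStrongModule {V : Type*} (G : SimpleGraph V) (M : Set V) : Prop :=
  IsModule G M ∧
    ∀ M' : Set V, IsModule G M' → (M ∩ M').Nonempty → M ⊆ M' ∨ M' ⊆ M

/-- A nonempty strong module ≠ V(G) whose only proper strong superset is V(G). -/
def IsMaximalStrongModule {V : Type*} (G : SimpleGraph V) (M : Set V) : Prop :=
  IsStrongModule G M ∧ M.Nonempty ∧ M ≠ Set.univ ∧
    ∀ M' : Set V, IsStrongModule G M' → M ⊂ M' → M' = Set.univ

/-- Quotient graph defined by a family `P` of vertex sets: two members are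
adjacent iff they are distinct and completely adjacent in `G`. -/
def QuotientOn {V : Type*} (G : SimpleGraph V) (P : Set (Set V)) : SimpleGraph P where
  Adj A B := A ≠ B ∧ ∀ a ∈ (A : Set V), ∀ b ∈ (B : Set V), G.Adj a b
  symm := by
    constructor
    intro A B h
    exact ⟨Ne.symm h.1, fun b hb a ha => (h.2 a ha b hb).symm⟩
  loopless := by
    constructor
    intro A h
    exact h.1 rfl

/-- The quotient graph Q̃(G), on the maximal strong modules of `G`. -/
def QuotientGraph {V : Type*} (G : SimpleGraph V) :
    SimpleGraph {M : Set V | IsMaximalStrongModule G M} :=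
  QuotientOn G {M : Set V | IsMaximalStrongModule G M}

/-- A graph is prime if it has at least four vertices and all its modules are
trivial (empty, singletons, or the whole vertex set). -/
def IsPrimeGraph {W : Type*} (H : SimpleGraph W) : Prop :=
  4 ≤ Nat.card W ∧
    ∀ M : Set W, IsModule H M → M = ∅ ∨ M = Set.univ ∨ ∃ w, M = {w}

/-- `G` contains an induced copy of `H`. -/
def HasInducedCopy {W V : Type*} (H : SimpleGraph W) (G : SimpleGraph V) : Prop :=
  ∃ f : W ↪ V, ∀ a b : W, G.Adj (f a) (f b) ↔ H.Adj a b

/-- The path on four vertices. -/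
def GraphP4 : SimpleGraph (Fin 4) :=
  SimpleGraph.fromRel fun a b =>
    (a, b) ∈ ([(0, 1), (1, 2), (2, 3)] : List (Fin 4 × Fin 4))

/-- The cycle on four vertices. -/
def GraphC4 : SimpleGraph (Fin 4) :=
  SimpleGraph.fromRel fun a b =>
    (a, b) ∈ ([(0, 1), (1, 2), (2, 3), (0, 3)] : List (Fin 4 × Fin 4))

/-- The bull: triangle 0,1,2 with pendant 3 at 0 and pendant 4 at 2. -/
def GraphBull : SimpleGraph (Fin 5) :=
  SimpleGraph.fromRel fun a b =>
    (a, b) ∈ ([(0, 1), (0, 2), (1, 2), (0, 3), (2, 4)] : List (Fin 5 × Fin 5))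

/-- The dart: triangle 0,1,2; vertex 4 adjacent exactly to 0 and 2;
vertex 3 adjacent exactly to 0. -/
def GraphDart : SimpleGraph (Fin 5) :=
  SimpleGraph.fromRel fun a b =>
    (a, b) ∈ ([(0, 1), (0, 2), (1, 2), (0, 4), (2, 4), (0, 3)] : List (Fin 5 × Fin 5))

/-- The fox: adjacent vertices 0,1 and pairwise nonadjacent 2,3,4, each
adjacent to both 0 and 1 (K5 minus a triangle). -/
def GraphFox : SimpleGraph (Fin 5) :=
  SimpleGraph.fromRel fun a b =>
    (a, b) ∈ ([(0, 1), (0, 2), (0, 3), (0, 4), (1, 2), (1, 3), (1, 4)] : List (Fin 5 × Fin 5))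

/-- The gem: induced path 0-1-2-3 plus vertex 4 adjacent to all of them. -/
def GraphGem : SimpleGraph (Fin 5) :=
  SimpleGraph.fromRel fun a b =>
    (a, b) ∈ ([(0, 1), (1, 2), (2, 3), (0, 4), (1, 4), (2, 4), (3, 4)] : List (Fin 5 × Fin 5))

/-- `G` has no induced subgraph isomorphic to a member of
F = {C4, bull, dart, fox, gem}. -/
def FFree {V : Type*} (G : SimpleGraph V) : Prop :=
  ¬ HasInducedCopy GraphC4 G ∧ ¬ HasInducedCopy GraphBull G ∧
  ¬ HasInducedCopy GraphDart G ∧ ¬ HasInducedCopy GraphFox G ∧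
  ¬ HasInducedCopy GraphGem G

/-- `X` is an association set of `G`: the graph `G - X` has no induced `P₃`,
i.e., every component of `G - X` is a clique. -/
def IsAssociationSet {V : Type*} (G : SimpleGraph V) (X : Set V) : Prop :=
  ∀ a b c : V, a ∉ X → b ∉ X → c ∉ X →
    G.Adj a b → G.Adj b c → a ≠ c → G.Adj a c

/-- `X` is a dissociation set of `G`: the graph `G - X` has no `P₃` subgraph,
i.e., every component of `G - X` has at most two vertices. -/
def IsDissociationSet {V : Type*} (G : SimpleGraph V) (X : Set V) : Prop :=
  ∀ a b c : V, a ∉ X → b ∉ X → c ∉ X → G.Adj a b → G.Adj b c → a = c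

/-- Minimum cardinality of an association set of `G`. -/
noncomputable def optAsso {V : Type*} (G : SimpleGraph V) : ℕ :=
  sInf {n : ℕ | ∃ X : Set V, IsAssociationSet G X ∧ X.ncard = n}

/-- Minimum cardinality of a dissociation set of `G`. -/
noncomputable def optDiss {V : Type*} (G : SimpleGraph V) : ℕ :=
  sInf {n : ℕ | ∃ X : Set V, IsDissociationSet G X ∧ X.ncard = n}

/-! Let `a - b - c` be an induced `P₃` in a maximal strong module `M`. The vertices outside `M`
with no neighbour in `M` are closed under adjacency (a neighbour complete to `M` would span a dart
with `a, b, c`), so by connectivity every vertex outside `M` is complete to `M`; two such vertices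
are adjacent, else they span a `C₄` with `a, c`. So the vertices outside `M` are universal. Given
one universal vertex, `C₄`, gem and dart forbid an induced `P₃` with a non-universal middle vertex,
hence `b` is universal. Then `b` and a vertex outside `M` are adjacent universal vertices, so
fox-freeness rules out three pairwise nonadjacent vertices, and the non-universal vertices split
into the clique of `a` and the clique of its non-neighbours: the excluded partition. -/

section

variable {V : Type*} {G : SimpleGraph V}

lemma hasInducedCopy_of_adj_iff {W : Type*} {H : SimpleGraph W} (f : W → V)
    (hadj : ∀ i j, G.Adj (f i) (f j) ↔ H.Adj i j)
    (hne : ∀ i j, i ≠ j → ¬ H.Adj i j → f i ≠ f j) : HasInducedCopy H G := by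
  refine ⟨⟨f, fun i j hij => ?_⟩, hadj⟩
  by_contra hne'
  by_cases hH : H.Adj i j
  · exact G.loopless.irrefl (f j) (hij ▸ (hadj i j).2 hH)
  · exact hne i j hne' hH hij

lemma hasInducedCopy_graphC4 {v₀ v₁ v₂ v₃ : V} (h01 : G.Adj v₀ v₁) (h12 : G.Adj v₁ v₂)
    (h23 : G.Adj v₂ v₃) (h03 : G.Adj v₀ v₃) (n02 : ¬ G.Adj v₀ v₂) (n13 : ¬ G.Adj v₁ v₃)
    (d02 : v₀ ≠ v₂) (d13 : v₁ ≠ v₃) : HasInducedCopy GraphC4 G := by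
  refine hasInducedCopy_of_adj_iff ![v₀, v₁, v₂, v₃] (fun i j => ?_) (fun i j => ?_) <;>
    fin_cases i <;> fin_cases j <;>
    simp [GraphC4, G.adj_comm, *, Ne.symm]

lemma hasInducedCopy_graphDart {v₀ v₁ v₂ v₃ v₄ : V} (h01 : G.Adj v₀ v₁) (h02 : G.Adj v₀ v₂)
    (h12 : G.Adj v₁ v₂) (h03 : G.Adj v₀ v₃) (h04 : G.Adj v₀ v₄) (h24 : G.Adj v₂ v₄)
    (n13 : ¬ G.Adj v₁ v₃) (n14 : ¬ G.Adj v₁ v₄) (n23 : ¬ G.Adj v₂ v₃) (n34 : ¬ G.Adj v₃ v₄)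
    (d13 : v₁ ≠ v₃) (d14 : v₁ ≠ v₄) (d23 : v₂ ≠ v₃) (d34 : v₃ ≠ v₄) :
    HasInducedCopy GraphDart G := by
  refine hasInducedCopy_of_adj_iff ![v₀, v₁, v₂, v₃, v₄] (fun i j => ?_) (fun i j => ?_) <;>
    fin_cases i <;> fin_cases j <;>
    simp [GraphDart, G.adj_comm, *, Ne.symm]

lemma hasInducedCopy_graphFox {v₀ v₁ v₂ v₃ v₄ : V} (h01 : G.Adj v₀ v₁) (h02 : G.Adj v₀ v₂)
    (h03 : G.Adj v₀ v₃) (h04 : G.Adj v₀ v₄) (h12 : G.Adj v₁ v₂) (h13 : G.Adj v₁ v₃)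
    (h14 : G.Adj v₁ v₄) (n23 : ¬ G.Adj v₂ v₃) (n24 : ¬ G.Adj v₂ v₄) (n34 : ¬ G.Adj v₃ v₄)
    (d23 : v₂ ≠ v₃) (d24 : v₂ ≠ v₄) (d34 : v₃ ≠ v₄) :
    HasInducedCopy GraphFox G := by
  refine hasInducedCopy_of_adj_iff ![v₀, v₁, v₂, v₃, v₄] (fun i j => ?_) (fun i j => ?_) <;>
    fin_cases i <;> fin_cases j <;>
    simp [GraphFox, G.adj_comm, *, Ne.symm]

lemma hasInducedCopy_graphGem {v₀ v₁ v₂ v₃ v₄ : V} (h01 : G.Adj v₀ v₁) (h12 : G.Adj v₁ v₂)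
    (h23 : G.Adj v₂ v₃) (h04 : G.Adj v₀ v₄) (h14 : G.Adj v₁ v₄) (h24 : G.Adj v₂ v₄)
    (h34 : G.Adj v₃ v₄) (n02 : ¬ G.Adj v₀ v₂) (n03 : ¬ G.Adj v₀ v₃) (n13 : ¬ G.Adj v₁ v₃)
    (d02 : v₀ ≠ v₂) (d03 : v₀ ≠ v₃) (d13 : v₁ ≠ v₃) :
    HasInducedCopy GraphGem G := by
  refine hasInducedCopy_of_adj_iff ![v₀, v₁, v₂, v₃, v₄] (fun i j => ?_) (fun i j => ?_) <;>
    fin_cases i <;> fin_cases j <;>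
    simp [GraphGem, G.adj_comm, *, Ne.symm]

lemma SimpleGraph.IsUniversal.ne_of_not_adj {u v w : V} (hu : G.IsUniversal u) (hvw : v ≠ w)
    (h : ¬ G.Adj v w) : u ≠ v := by
  rintro rfl
  exact h (hu hvw)

lemma adj_of_not_adj_of_isUniversal (hfox : ¬ HasInducedCopy GraphFox G) {u₁ u₂ : V}
    (hu₁ : G.IsUniversal u₁) (hu₂ : G.IsUniversal u₂) (hu₁₂ : u₁ ≠ u₂) {x y z : V}
    (hxy : x ≠ y) (hxz : x ≠ z) (hyz : y ≠ z) (nxy : ¬ G.Adj x y) (nxz : ¬ G.Adj x z) :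
    G.Adj y z := by
  by_contra nyz
  have hne {u : V} (hu : G.IsUniversal u) : u ≠ x ∧ u ≠ y ∧ u ≠ z :=
    ⟨hu.ne_of_not_adj hxy nxy, hu.ne_of_not_adj hxy.symm (nxy ·.symm),
      hu.ne_of_not_adj hxz.symm (nxz ·.symm)⟩
  exact hfox (hasInducedCopy_graphFox (hu₁ hu₁₂) (hu₁ (hne hu₁).1) (hu₁ (hne hu₁).2.1)
    (hu₁ (hne hu₁).2.2) (hu₂ (hne hu₂).1) (hu₂ (hne hu₂).2.1) (hu₂ (hne hu₂).2.2)
    nxy nxz nyz hxy hxz hyz)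

lemma isAssociationSet_universalVerts (hC4 : ¬ HasInducedCopy GraphC4 G)
    (hdart : ¬ HasInducedCopy GraphDart G) (hgem : ¬ HasInducedCopy GraphGem G) {n : V}
    (hn : G.IsUniversal n) : IsAssociationSet G G.universalVerts := by
  intro p q r hp hq hr hpq hqr hpr
  by_contra npr
  obtain ⟨w, hqw, nqw⟩ : ∃ w, q ≠ w ∧ ¬ G.Adj q w := by
    simpa [universalVerts, IsUniversal] using hq
  have hn' {v : V} (hv : v ∉ G.universalVerts) : G.Adj n v := hn fun h => hv (h ▸ hn)
  have hw : w ∉ G.universalVerts := fun h => nqw (h hqw.symm).symm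
  have hpw : p ≠ w := by rintro rfl; exact nqw hpq.symm
  have hrw : r ≠ w := by rintro rfl; exact nqw hqr
  by_cases hwp : G.Adj w p <;> by_cases hwr : G.Adj w r
  · exact hC4 (hasInducedCopy_graphC4 hpq hqr hwr.symm hwp.symm npr nqw hpr hqw)
  · exact hgem (hasInducedCopy_graphGem hwp hpq hqr (hn' hw).symm (hn' hp).symm (hn' hq).symm
      (hn' hr).symm (nqw ·.symm) hwr npr hqw.symm hrw.symm hpr)
  · exact hgem (hasInducedCopy_graphGem hpq hqr hwr.symm (hn' hp).symm (hn' hq).symm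
      (hn' hr).symm (hn' hw).symm npr (hwp ·.symm) nqw hpr hpw hqw)
  · exact hdart (hasInducedCopy_graphDart (hn' hp) (hn' hq) hpq (hn' hw) (hn' hr) hqr
      (hwp ·.symm) npr nqw hwr hpw hpr hqw hrw.symm)

lemma exists_partition_of_isAssociationSet {X : Set V} (hXU : ∀ u ∈ X, G.IsUniversal u)
    (hX : IsAssociationSet G X) {a : V} (ha : a ∉ X)
    (hnonadj : ∀ v w, v ≠ a → w ≠ a → v ≠ w → ¬ G.Adj a v → ¬ G.Adj a w → G.Adj v w) :
    ∃ U C1 C2 : Set V,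
      Disjoint U C1 ∧ Disjoint U C2 ∧ Disjoint C1 C2 ∧ U ∪ C1 ∪ C2 = Set.univ ∧
      (∀ u ∈ U, ∀ v : V, v ≠ u → G.Adj u v) ∧
      G.IsClique C1 ∧ G.IsClique C2 ∧ (∀ a ∈ C1, ∀ b ∈ C2, ¬ G.Adj a b) := by
  have hC1 {v w : V} (hv : v ∉ X) (hav : v = a ∨ G.Adj a v) (hvw : G.Adj v w) (hwa : w ≠ a) :
      G.Adj a w := by
    rcases hav with rfl | hav
    · exact hvw
    by_cases hw : w ∈ X
    · exact (hXU w hw hwa).symm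
    · exact hX a v w ha hv hw hav hvw hwa.symm
  refine ⟨X, {v | v ∉ X ∧ (v = a ∨ G.Adj a v)}, {v | v ≠ a ∧ ¬ G.Adj a v}, ?_, ?_, ?_, ?_,
    fun u hu v hvu => hXU u hu hvu.symm, ?_, ?_, ?_⟩
  · exact Set.disjoint_left.2 fun v hv hv' => hv'.1 hv
  · exact Set.disjoint_left.2 fun v hv hv' => hv'.2 (hXU v hv hv'.1).symm
  · exact Set.disjoint_left.2 fun v hv hv' => hv.2.elim hv'.1 hv'.2
  · ext v
    by_cases hv : v ∈ X
    · simp [hv]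
    · by_cases hav : v = a ∨ G.Adj a v <;> simp_all
  · rintro v ⟨hv, hav⟩ w ⟨hw, haw⟩ hvw
    rcases hav with rfl | hav
    · exact haw.resolve_left hvw.symm
    rcases haw with rfl | haw
    · exact hav.symm
    · exact hX v a w hv ha hw hav.symm haw hvw
  · exact fun v hv w hw hvw => hnonadj v w hv.1 hw.1 hvw hv.2 hw.2
  · rintro v ⟨hv, hav⟩ w ⟨hwa, haw⟩ hvw
    exact haw (hC1 hv hav hvw hwa)

section Module

variable {M : Set V}

lemma IsModule.forall_adj_of_adj (hM : IsModule G M) {x m : V} (hx : x ∉ M) (hm : m ∈ M)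
    (hxm : G.Adj x m) : ∀ m' ∈ M, G.Adj x m' :=
  (hM x hx).resolve_right fun h => h m hm hxm

lemma IsModule.forall_adj_of_notMem (hdart : ¬ HasInducedCopy GraphDart G)
    (hconn : G.Preconnected) (hM : IsModule G M) {a b c : V} (ha : a ∈ M) (hb : b ∈ M)
    (hc : c ∈ M) (hab : G.Adj a b) (hbc : G.Adj b c) (nac : ¬ G.Adj a c) (hac : a ≠ c)
    {x : V} (hx : x ∉ M) : ∀ m ∈ M, G.Adj x m := by
  let S := {x | x ∉ M ∧ ∀ m ∈ M, ¬ G.Adj x m}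
  have hS {x y : V} (hx : x ∈ S) (hxy : G.Adj x y) : y ∈ S := by
    obtain ⟨hxM, nx⟩ := hx
    have hyM : y ∉ M := fun hy => nx y hy hxy
    refine ⟨hyM, fun m hm hym => ?_⟩
    have hy := hM.forall_adj_of_adj hyM hm hym
    have hne {m : V} (hm : m ∈ M) : m ≠ x := by rintro rfl; exact hxM hm
    exact hdart (hasInducedCopy_graphDart (hy a ha) (hy b hb) hab hxy.symm (hy c hc) hbc
      (nx a ha ·.symm) nac (nx b hb ·.symm) (nx c hc) (hne ha) hac (hne hb) (hne hc).symm)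
  refine (hM x hx).resolve_right fun hxS => ?_
  obtain ⟨d, -, hd, hd'⟩ := (hconn x a).some.exists_boundary_dart S ⟨hx, hxS⟩ (·.1 ha)
  exact hd' (hS hd d.adj)

lemma IsModule.isUniversal_of_notMem (hC4 : ¬ HasInducedCopy GraphC4 G)
    (hdart : ¬ HasInducedCopy GraphDart G) (hconn : G.Preconnected) (hM : IsModule G M)
    {a b c : V} (ha : a ∈ M) (hb : b ∈ M) (hc : c ∈ M) (hab : G.Adj a b) (hbc : G.Adj b c)
    (nac : ¬ G.Adj a c) (hac : a ≠ c) {x : V} (hx : x ∉ M) : G.IsUniversal x := by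
  have hout {y : V} (hy : y ∉ M) : ∀ m ∈ M, G.Adj y m :=
    hM.forall_adj_of_notMem hdart hconn ha hb hc hab hbc nac hac hy
  intro y hxy
  by_cases hy : y ∈ M
  · exact hout hx y hy
  by_contra nxy
  exact hC4 (hasInducedCopy_graphC4 (hout hx a ha) (hout hy a ha).symm (hout hy c hc)
    (hout hx c hc) nxy nac hxy hac)

end Module

end

theorem stmt_3_general {V : Type*} (G : SimpleGraph V) (hconn : G.Connected)
    (hF : FFree G)
    (hnp : ¬ ∃ U C1 C2 : Set V,
      Disjoint U C1 ∧ Disjoint U C2 ∧ Disjoint C1 C2 ∧ U ∪ C1 ∪ C2 = Set.univ ∧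
      (∀ u ∈ U, ∀ v : V, v ≠ u → G.Adj u v) ∧
      G.IsClique C1 ∧ G.IsClique C2 ∧ (∀ a ∈ C1, ∀ b ∈ C2, ¬ G.Adj a b)) :
    ∀ M : Set V, IsMaximalStrongModule G M →
      ∀ a ∈ M, ∀ b ∈ M, ∀ c ∈ M, G.Adj a b → G.Adj b c → a ≠ c → G.Adj a c := by
  obtain ⟨hC4, -, hdart, hfox, hgem⟩ := hF
  rintro M ⟨⟨hM, -⟩, -, hM_ne, -⟩ a ha b hb c hc hab hbc hac
  by_contra nac
  obtain ⟨n, hn⟩ := (Set.ne_univ_iff_exists_notMem M).1 hM_ne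
  have hout {x : V} (hx : x ∉ M) : G.IsUniversal x :=
    hM.isUniversal_of_notMem hC4 hdart hconn.preconnected ha hb hc hab hbc nac hac hx
  have hX := isAssociationSet_universalVerts hC4 hdart hgem (hout hn)
  have ha' : a ∉ G.universalVerts := fun h => nac (h hac)
  have hb' : G.IsUniversal b := by
    by_contra hb_non
    exact nac (hX a b c ha' hb_non (fun h => nac (h hac.symm).symm) hab hbc hac)
  have hbn : b ≠ n := by rintro rfl; exact hn hb
  exact hnp (exists_partition_of_isAssociationSet (fun _ => id) hX ha'
    fun v w hva hwa hvw nav naw =>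
      adj_of_not_adj_of_isUniversal hfox hb' (hout hn) hbn hva.symm hwa.symm hvw nav naw)

/-- Under the same hypotheses, every maximal strong module induces
a cluster graph (no induced `P₃` inside the module). -/
theorem stmt_3 {V : Type*} [Fintype V] (G : SimpleGraph V) (hconn : G.Connected)
    (hF : FFree G) (hnc : ¬ G.IsClique (Set.univ : Set V))
    (hnp : ¬ ∃ U C1 C2 : Set V,
      Disjoint U C1 ∧ Disjoint U C2 ∧ Disjoint C1 C2 ∧ U ∪ C1 ∪ C2 = Set.univ ∧
      (∀ u ∈ U, ∀ v : V, v ≠ u → G.Adj u v) ∧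
      G.IsClique C1 ∧ G.IsClique C2 ∧ (∀ a ∈ C1, ∀ b ∈ C2, ¬ G.Adj a b)) :
    ∀ M : Set V, IsMaximalStrongModule G M →
      ∀ a ∈ M, ∀ b ∈ M, ∀ c ∈ M, G.Adj a b → G.Adj b c → a ≠ c → G.Adj a c :=
  stmt_3_general G hconn hF hnp
end

section
/- Let G be a connected finite simple graph on at least two vertices. Then the quotient graph Q̃(G) is either a complete graph, or it is prime (it has at least four vertices and all of its modules are trivial). -/
open SimpleGraph

/-!
If `Gᶜ` is disconnected, every maximal strong module is a connected component of `Gᶜ`, and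
vertices in different components of `Gᶜ` are adjacent in `G`, so `Q̃(G)` is complete.

If `G` and `Gᶜ` are both connected, two proper modules never cover `V`. So the union of two
overlapping proper modules is proper, and the maximal proper modules partition `V`; they are the
maximal strong modules and contain every proper module they meet. A module of `Q̃(G)` lifts to a
module of `G`, which is `V` or lies inside one part, so `Q̃(G)` has only trivial modules. It has
more than two vertices, since two parts would cover `V`, and not exactly three, since every graph
on three vertices has a module with two vertices.
-/

section

variable {V : Type*} {G : SimpleGraph V}

lemma SimpleGraph.Reachable.exists_adj_mem_notMem {x y : V} (h : G.Reachable x y) {S : Set V}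
    (hx : x ∈ S) (hy : y ∉ S) : ∃ u ∈ S, ∃ w ∉ S, G.Adj u w := by
  obtain ⟨p⟩ := h
  obtain ⟨d, -, hd₁, hd₂⟩ := p.exists_boundary_dart S hx hy
  exact ⟨_, hd₁, _, hd₂, d.adj⟩

lemma compl_adj_of_notMem_of_mem {M : Set V} {x a : V} (hx : x ∉ M) (ha : a ∈ M)
    (h : ¬G.Adj x a) : Gᶜ.Adj x a :=
  (G.compl_adj x a).mpr ⟨fun e => hx (e ▸ ha), h⟩

lemma adj_of_not_reachable_compl {u v : V} (h : ¬Gᶜ.Reachable u v) : G.Adj u v := by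
  by_contra hadj
  refine h (Adj.reachable ((G.compl_adj u v).mpr ⟨?_, hadj⟩))
  rintro rfl
  exact h .rfl

namespace IsModule

lemma compl {M : Set V} (hM : IsModule G M) : IsModule Gᶜ M := by
  intro x hx
  rcases hM x hx with h | h
  · exact Or.inr fun a ha hc => ((G.compl_adj x a).mp hc).2 (h a ha)
  · exact Or.inl fun a ha => compl_adj_of_notMem_of_mem hx ha (h a ha)

lemma union {A B : Set V} (hA : IsModule G A) (hB : IsModule G B) (hAB : (A ∩ B).Nonempty) :
    IsModule G (A ∪ B) := by
  obtain ⟨z, hzA, hzB⟩ := hAB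
  intro x hx
  rw [Set.mem_union, not_or] at hx
  rcases hA x hx.1 with h₁ | h₁ <;> rcases hB x hx.2 with h₂ | h₂
  · exact Or.inl fun a ha => ha.elim (h₁ a) (h₂ a)
  · exact absurd (h₁ z hzA) (h₂ z hzB)
  · exact absurd (h₂ z hzB) (h₁ z hzA)
  · exact Or.inr fun a ha => ha.elim (h₁ a) (h₂ a)

lemma adj_or_not_adj_of_disjoint {A B : Set V} (hA : IsModule G A) (hB : IsModule G B)
    (hAB : Disjoint A B) :
    (∀ a ∈ A, ∀ b ∈ B, G.Adj a b) ∨ (∀ a ∈ A, ∀ b ∈ B, ¬G.Adj a b) := by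
  rcases A.eq_empty_or_nonempty with rfl | ⟨a₀, ha₀⟩
  · simp
  have hnotA : ∀ b ∈ B, b ∉ A := fun b hb hbA => Set.disjoint_left.mp hAB hbA hb
  rcases hB a₀ (Set.disjoint_left.mp hAB ha₀) with h | h
  · refine Or.inl fun a ha b hb => ?_
    exact ((hA b (hnotA b hb)).resolve_right fun h' => h' a₀ ha₀ (h b hb).symm) a ha |>.symm
  · refine Or.inr fun a ha b hb hab => ?_
    exact (hA b (hnotA b hb)).elim (fun h' => h b hb (h' a₀ ha₀).symm) (fun h' => h' a ha hab.symm)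

lemma union_ne_univ (hG : G.Preconnected) (hGc : Gᶜ.Preconnected) {A B : Set V}
    (hA : IsModule G A) (hB : IsModule G B) (hAu : A ≠ Set.univ) (hBu : B ≠ Set.univ) :
    A ∪ B ≠ Set.univ := by
  intro hAB
  have hcover : ∀ z, z ∈ A ∨ z ∈ B := fun z => (Set.eq_univ_iff_forall.mp hAB z)
  obtain ⟨x, hxB⟩ := (Set.ne_univ_iff_exists_notMem B).mp hBu
  obtain ⟨y, hyA⟩ := (Set.ne_univ_iff_exists_notMem A).mp hAu
  have hxA : x ∈ A := (hcover x).resolve_right hxB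
  have hyB : y ∈ B := (hcover y).resolve_left hyA
  wlog hx : ∀ b ∈ B, G.Adj x b generalizing G
  · refine this hGc (by rwa [compl_compl]) hA.compl hB.compl fun b hb => ?_
    exact compl_adj_of_notMem_of_mem hxB hb ((hB x hxB).resolve_left hx b hb)
  -- then every vertex outside `B` is adjacent to all of `B`, so no edge of `Gᶜ` leaves `Bᶜ`
  have hyA' : ∀ a ∈ A, G.Adj y a :=
    (hA y hyA).resolve_right fun h => h x hxA (hx y hyB).symm
  have hout : ∀ z ∉ B, ∀ b ∈ B, G.Adj z b := fun z hz =>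
    (hB z hz).resolve_right fun h => h y hyB (hyA' z ((hcover z).resolve_right hz)).symm
  obtain ⟨u, hu, w, hw, huw⟩ := (hGc x y).exists_adj_mem_notMem (S := Bᶜ) hxB (not_not.mpr hyB)
  exact ((G.compl_adj u w).mp huw).2 (hout u hu w (not_not.mp hw))

end IsModule

lemma card_ne_three_of_forall_isModule {W : Type*} {H : SimpleGraph W}
    (h : ∀ M, IsModule H M → M = ∅ ∨ M = Set.univ ∨ ∃ w, M = {w}) : Nat.card W ≠ 3 := by
  intro h3
  obtain ⟨a, b, c, hab, hac, hbc, huniv⟩ := Set.ncard_eq_three.mp ((Set.ncard_univ W).trans h3)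
  have hmem : ∀ w, w = a ∨ w = b ∨ w = c := fun w => by
    have hw : w ∈ ({a, b, c} : Set W) := huniv ▸ Set.mem_univ w
    simpa only [Set.mem_insert_iff, Set.mem_singleton_iff] using hw
  have hpair : ∀ x y z, x ≠ y → z ≠ x → z ≠ y → (∀ w, w = x ∨ w = y ∨ w = z) →
      (H.Adj z x ↔ H.Adj z y) → False := by
    intro x y z hxy hzx hzy hxyz hz
    have hmod : IsModule H {x, y} := by
      intro w hw
      obtain rfl : w = z := by
        simp only [Set.mem_insert_iff, Set.mem_singleton_iff] at hw
        have := hxyz w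
        tauto
      by_cases hwx : H.Adj w x
      · exact .inl (by simp [hwx, hz.mp hwx])
      · exact .inr (by simp [hwx, mt hz.mpr hwx])
    rcases h _ hmod with h₀ | hu | ⟨w, hw⟩
    · exact (Set.insert_nonempty x {y}).ne_empty h₀
    · have hz' : z ∈ ({x, y} : Set W) := hu ▸ Set.mem_univ z
      simp only [Set.mem_insert_iff, Set.mem_singleton_iff] at hz'
      tauto
    · have hx : x ∈ ({w} : Set W) := hw ▸ Set.mem_insert x {y}
      have hy : y ∈ ({w} : Set W) := hw ▸ Set.mem_insert_of_mem x rfl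
      exact hxy (hx.trans hy.symm)
  -- some vertex sees the other two alike, else every degree would be one and their sum odd
  by_cases h₁ : H.Adj a b ↔ H.Adj a c
  · exact hpair b c a hbc hab hac (fun w => by have := hmem w; tauto) h₁
  by_cases h₂ : H.Adj b a ↔ H.Adj b c
  · exact hpair a c b hac hab.symm hbc (fun w => by have := hmem w; tauto) h₂
  refine hpair a b c hab hac.symm hbc.symm hmem ?_
  rw [H.adj_comm b a] at h₂
  rw [H.adj_comm c a, H.adj_comm c b]
  tauto

namespace IsMaximalStrongModule

lemma eq_of_inter_nonempty {M N : Set V} (hM : IsMaximalStrongModule G M)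
    (hN : IsMaximalStrongModule G N) (hMN : (M ∩ N).Nonempty) : M = N := by
  rcases hM.1.2 N hN.1.1 hMN with h | h
  · by_contra hne
    exact hN.2.2.1 (hM.2.2.2 N hN.1 (h.ssubset_of_ne hne))
  · by_contra hne
    exact hM.2.2.1 (hN.2.2.2 M hM.1 (h.ssubset_of_ne (Ne.symm hne)))

lemma disjoint_of_ne {M N : Set V} (hM : IsMaximalStrongModule G M)
    (hN : IsMaximalStrongModule G N) (hMN : M ≠ N) : Disjoint M N :=
  Set.disjoint_iff_inter_eq_empty.mpr <|
    Set.not_nonempty_iff_eq_empty.mp fun h => hMN (hM.eq_of_inter_nonempty hN h)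

end IsMaximalStrongModule

lemma isMaximalStrongModule_of_absorbing {P : Set V} (hP : IsModule G P) (hPu : P ≠ Set.univ)
    (hPne : P.Nonempty)
    (habs : ∀ N, IsModule G N → N ≠ Set.univ → (P ∩ N).Nonempty → N ⊆ P) :
    IsMaximalStrongModule G P := by
  refine ⟨⟨hP, fun N hN hPN => ?_⟩, hPne, hPu, fun N hN hPN => ?_⟩
  · by_cases hNu : N = Set.univ
    · exact .inl (hNu ▸ Set.subset_univ P)
    · exact .inr (habs N hN hNu hPN)
  · by_contra hNu
    have hPN' : (P ∩ N).Nonempty := by rwa [Set.inter_eq_left.mpr hPN.subset]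
    exact hPN.not_subset (habs N hN.1 hNu hPN')

section CoComponents

lemma adj_of_notMem_supp {C : Gᶜ.ConnectedComponent} {x a : V} (hx : x ∉ C.supp)
    (ha : a ∈ C.supp) : G.Adj x a :=
  adj_of_not_reachable_compl fun h => hx ((ConnectedComponent.sound h).trans ha)

lemma isModule_supp_union (C D : Gᶜ.ConnectedComponent) : IsModule G (C.supp ∪ D.supp) :=
  fun _ hx => Or.inl fun _ ha =>
    ha.elim (adj_of_notMem_supp fun h => hx (.inl h)) (adj_of_notMem_supp fun h => hx (.inr h))

lemma isModule_supp (C : Gᶜ.ConnectedComponent) : IsModule G C.supp :=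
  fun _ hx => Or.inl fun _ => adj_of_notMem_supp hx

lemma IsModule.subset_supp_of_compl_adj {M : Set V} (hM : IsModule G M) {u w : V} (hu : u ∉ M)
    (hw : w ∈ M) (huw : Gᶜ.Adj u w) : M ⊆ (Gᶜ.connectedComponentMk u).supp := by
  have hnone : ∀ a ∈ M, ¬G.Adj u a :=
    (hM u hu).resolve_left fun h => ((G.compl_adj u w).mp huw).2 (h w hw)
  intro a ha
  exact (ConnectedComponent.sound (compl_adj_of_notMem_of_mem hu ha (hnone a ha)).reachable).symm

lemma isStrongModule_supp (C : Gᶜ.ConnectedComponent) : IsStrongModule G C.supp := by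
  refine ⟨isModule_supp C, fun M hM ⟨x, hxC, hxM⟩ => ?_⟩
  by_contra! h
  obtain ⟨y, hyC, hyM⟩ := Set.not_subset.mp h.1
  obtain ⟨z, hzM, hzC⟩ := Set.not_subset.mp h.2
  have hyx : Gᶜ.Reachable y x := ConnectedComponent.exact (hyC.trans hxC.symm)
  obtain ⟨u, hu, w, hw, huw⟩ := hyx.exists_adj_mem_notMem (S := Mᶜ) hyM (not_not.mpr hxM)
  have hsub := hM.subset_supp_of_compl_adj hu (not_not.mp hw) huw
  exact hzC (((hsub hzM).trans (hsub hxM).symm).trans hxC)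

lemma IsStrongModule.subset_supp {M : Set V} (hM : IsStrongModule G M) (hMu : M ≠ Set.univ)
    {v : V} (hv : v ∈ M) : M ⊆ (Gᶜ.connectedComponentMk v).supp := by
  set C := Gᶜ.connectedComponentMk v
  obtain ⟨t, ht⟩ := (Set.ne_univ_iff_exists_notMem M).mp hMu
  set D := Gᶜ.connectedComponentMk t
  have hMCD : M ⊆ C.supp ∪ D.supp :=
    (hM.2 _ (isModule_supp_union C D) ⟨v, hv, .inl rfl⟩).resolve_right fun h => ht (h (.inr rfl))
  intro a ha
  rcases hMCD ha with haC | haD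
  · exact haC
  rcases hM.2 _ (isModule_supp D) ⟨a, ha, haD⟩ with h | h
  · exact haD.trans (h hv).symm
  · exact absurd (h rfl) ht

lemma IsMaximalStrongModule.eq_supp (hGc : ¬Gᶜ.Preconnected) {M : Set V}
    (hM : IsMaximalStrongModule G M) {v : V} (hv : v ∈ M) :
    M = (Gᶜ.connectedComponentMk v).supp := by
  have hsub := hM.1.subset_supp hM.2.2.1 hv
  by_contra hne
  refine hGc fun a b => ConnectedComponent.exact ?_
  have huniv := hM.2.2.2 _ (isStrongModule_supp _) (hsub.ssubset_of_ne hne)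
  have ha : a ∈ (Gᶜ.connectedComponentMk v).supp := huniv ▸ Set.mem_univ a
  have hb : b ∈ (Gᶜ.connectedComponentMk v).supp := huniv ▸ Set.mem_univ b
  exact ha.trans hb.symm

theorem quotientGraph_adj_of_not_preconnected_compl (hGc : ¬Gᶜ.Preconnected)
    (A B : {M : Set V | IsMaximalStrongModule G M}) (hAB : A ≠ B) : (QuotientGraph G).Adj A B := by
  refine ⟨hAB, fun a ha b hb => adj_of_not_reachable_compl fun hab => hAB (Subtype.ext ?_)⟩
  rw [IsMaximalStrongModule.eq_supp hGc A.2 ha, IsMaximalStrongModule.eq_supp hGc B.2 hb,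
    ConnectedComponent.sound hab]

end CoComponents

section BothConnected

variable [Finite V]

lemma IsModule.exists_absorbing_superset (hG : G.Preconnected) (hGc : Gᶜ.Preconnected)
    {M₀ : Set V} (hM₀ : IsModule G M₀) (hM₀u : M₀ ≠ Set.univ) (hM₀ne : M₀.Nonempty) :
    ∃ P, M₀ ⊆ P ∧ IsMaximalStrongModule G P ∧
      ∀ N, IsModule G N → N ≠ Set.univ → (P ∩ N).Nonempty → N ⊆ P := by
  obtain ⟨P, ⟨hP, hPu, hM₀P⟩, hmax⟩ := Set.toFinite {M | IsModule G M ∧ M ≠ Set.univ ∧ M₀ ⊆ M}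
    |>.exists_maximal ⟨M₀, hM₀, hM₀u, subset_rfl⟩
  have habs : ∀ N, IsModule G N → N ≠ Set.univ → (P ∩ N).Nonempty → N ⊆ P := fun N hN hNu hPN =>
    Set.union_subset_iff.mp (hmax ⟨hP.union hN hPN, IsModule.union_ne_univ hG hGc hP hN hPu hNu,
      hM₀P.trans Set.subset_union_left⟩ Set.subset_union_left) |>.2
  exact ⟨P, hM₀P, isMaximalStrongModule_of_absorbing hP hPu (hM₀ne.mono hM₀P) habs, habs⟩

lemma IsMaximalStrongModule.subset_of_isModule (hG : G.Preconnected) (hGc : Gᶜ.Preconnected)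
    {M N : Set V} (hM : IsMaximalStrongModule G M) (hN : IsModule G N) (hNu : N ≠ Set.univ)
    (hMN : (M ∩ N).Nonempty) : N ⊆ M := by
  obtain ⟨P, hMP, hP, habs⟩ := hM.1.1.exists_absorbing_superset hG hGc hM.2.2.1 hM.2.1
  obtain rfl : M = P := hM.eq_of_inter_nonempty hP (by rw [Set.inter_eq_left.mpr hMP]; exact hM.2.1)
  exact habs N hN hNu hMN

lemma exists_isMaximalStrongModule_mem [Nontrivial V] (hG : G.Preconnected)
    (hGc : Gᶜ.Preconnected) (v : V) : ∃ M, IsMaximalStrongModule G M ∧ v ∈ M := by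
  have hv : IsModule G {v} := fun x _ => by
    by_cases h : G.Adj x v
    · exact .inl fun a ha => ha ▸ h
    · exact .inr fun a ha => ha ▸ h
  obtain ⟨P, hvP, hP, -⟩ := hv.exists_absorbing_superset hG hGc
    (Set.ne_univ_iff_exists_notMem _ |>.mpr (exists_ne v)) (Set.singleton_nonempty v)
  exact ⟨P, hP, hvP rfl⟩

end BothConnected

section Quotient

lemma IsModule.biUnion_of_quotientGraph
    (hcover : ∀ x : V, ∃ X, IsMaximalStrongModule G X ∧ x ∈ X)
    {S : Set {M : Set V | IsMaximalStrongModule G M}} (hS : IsModule (QuotientGraph G) S) :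
    IsModule G (⋃ X ∈ S, (X : Set V)) := by
  intro x hx
  obtain ⟨X, hX, hxX⟩ := hcover x
  have hXS : ⟨X, hX⟩ ∉ S := fun h => hx (Set.mem_biUnion h hxX)
  simp only [Set.mem_iUnion₂]
  rcases hS ⟨X, hX⟩ hXS with hall | hnone
  · exact .inl fun a ⟨Y, hY, haY⟩ => (hall Y hY).2 x hxX a haY
  · refine .inr fun a ⟨Y, hY, haY⟩ => ?_
    have hXY : X ≠ Y := by rintro rfl; exact hXS hY
    refine ((hX.1.1.adj_or_not_adj_of_disjoint Y.2.1.1 (hX.disjoint_of_ne Y.2 hXY)).resolve_left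
      fun h => hnone Y hY ⟨fun h' => hXY (congrArg Subtype.val h'), h⟩) x hxX a haY

section Prime

variable [Finite V] [Nontrivial V]

lemma isModule_quotientGraph_trivial (hG : G.Preconnected) (hGc : Gᶜ.Preconnected)
    {S : Set {M : Set V | IsMaximalStrongModule G M}} (hS : IsModule (QuotientGraph G) S) :
    S = ∅ ∨ S = Set.univ ∨ ∃ X, S = {X} := by
  have hN := hS.biUnion_of_quotientGraph (exists_isMaximalStrongModule_mem hG hGc)
  by_cases hNu : ⋃ X ∈ S, (X : Set V) = Set.univ
  · refine .inr (.inl (Set.eq_univ_of_forall fun X => ?_))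
    obtain ⟨x, hx⟩ := X.2.2.1
    obtain ⟨Y, hY, hxY⟩ := Set.mem_iUnion₂.mp (hNu ▸ Set.mem_univ x)
    rwa [Subtype.ext (X.2.eq_of_inter_nonempty Y.2 ⟨x, hx, hxY⟩)]
  rcases S.eq_empty_or_nonempty with hS₀ | ⟨X, hX⟩
  · exact .inl hS₀
  refine .inr (.inr ⟨X, Set.eq_singleton_iff_unique_mem.mpr ⟨hX, fun Y hY => ?_⟩⟩)
  obtain ⟨x, hx⟩ := X.2.2.1
  have hsub := X.2.subset_of_isModule hG hGc hN hNu ⟨x, hx, Set.mem_biUnion hX hx⟩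
  obtain ⟨y, hy⟩ := Y.2.2.1
  exact Subtype.ext (Y.2.eq_of_inter_nonempty X.2 ⟨y, hy, hsub (Set.mem_biUnion hY hy)⟩)

lemma four_le_card_quotientGraph (hG : G.Preconnected) (hGc : Gᶜ.Preconnected) :
    4 ≤ Nat.card {M : Set V | IsMaximalStrongModule G M} := by
  have hcover := exists_isMaximalStrongModule_mem hG hGc
  have hgt1 : 1 < Nat.card {M : Set V | IsMaximalStrongModule G M} := by
    obtain ⟨v⟩ := ‹Nontrivial V›.to_nonempty
    obtain ⟨A, hA, hvA⟩ := hcover v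
    obtain ⟨w, hwA⟩ := (Set.ne_univ_iff_exists_notMem A).mp hA.2.2.1
    obtain ⟨B, hB, hwB⟩ := hcover w
    exact Finite.one_lt_card_iff_nontrivial.mpr
      ⟨⟨A, hA⟩, ⟨B, hB⟩, fun h => hwA (by rwa [Subtype.mk.inj h])⟩
  have hne2 : Nat.card {M : Set V | IsMaximalStrongModule G M} ≠ 2 := by
    intro hcard
    obtain ⟨A, B, -, hAB⟩ := Nat.card_eq_two_iff.mp hcard
    refine IsModule.union_ne_univ hG hGc A.2.1.1 B.2.1.1 A.2.2.2.1 B.2.2.2.1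
      (Set.eq_univ_of_forall fun x => ?_)
    obtain ⟨X, hX, hxX⟩ := hcover x
    have hXAB : (⟨X, hX⟩ : {M : Set V | IsMaximalStrongModule G M}) ∈ ({A, B} : Set _) :=
      hAB ▸ Set.mem_univ _
    rcases hXAB with h | h
    · exact .inl (congrArg Subtype.val h ▸ hxX)
    · exact .inr (congrArg Subtype.val h ▸ hxX)
  have hne3 := card_ne_three_of_forall_isModule fun _ => isModule_quotientGraph_trivial hG hGc
  omega

theorem isPrimeGraph_quotientGraph (hG : G.Preconnected) (hGc : Gᶜ.Preconnected) :
    IsPrimeGraph (QuotientGraph G) :=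
  ⟨four_le_card_quotientGraph hG hGc, fun _ => isModule_quotientGraph_trivial hG hGc⟩

end Prime

end Quotient

end

/-- For a connected graph on at least two vertices, the quotient
graph Q̃(G) is either complete or prime. -/
theorem stmt_10 {V : Type*} [Fintype V] (G : SimpleGraph V) (hconn : G.Connected)
    (h2 : 2 ≤ Fintype.card V) :
    (∀ A B, A ≠ B → (QuotientGraph G).Adj A B) ∨ IsPrimeGraph (QuotientGraph G) := by
  by_cases hGc : Gᶜ.Preconnected
  · have : Nontrivial V := Fintype.one_lt_card_iff_nontrivial.mp h2
    exact .inr (isPrimeGraph_quotientGraph hconn.preconnected hGc)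
  · exact .inl (quotientGraph_adj_of_not_preconnected_compl hGc)
end
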